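/- arXiv:math/0307114 — 7 statements merged into one kernel-verified Lean document; each statement's English description precedes it below -/
import Mathlib

section
/- Let G be a group and ε : G × G → ℂˣ a 2-cocycle, i.e. ε(a,b)·ε(a·b,c) = ε(a,b·c)·ε(b,c) for all a,b,c ∈ G. Define F : G × G → ℂˣ by F(g,k) := ε(g,k)·ε(k, k⁻¹·g·k)⁻¹. Then F satisfies the groupoid-morphism (functoriality) identity F(g, k·l) = F(g,k)·F(k⁻¹·g·k, l) for all g,k,l ∈ G. (This is the statement that the transgression of a discrete-torsion gerbe is a morphism of groupoids F : 𝖫𝖷 → ℂˣ on the loop groupoid of a global quotient.) -/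
/-- The transgression of a discrete-torsion gerbe is a morphism of groupoids
`F : 𝖫𝖷 → ℂˣ` on the loop groupoid of a global quotient. -/
theorem transgression_is_groupoid_morphism {G : Type*} [Group G] (ε : G → G → ℂˣ)
    (hcoc : ∀ a b c : G, ε a b * ε (a * b) c = ε a (b * c) * ε b c)
    (F : G → G → ℂˣ)
    (hF : ∀ g k : G, F g k = ε g k * (ε k (k⁻¹ * g * k))⁻¹) :
    ∀ g k l : G, F g (k * l) = F g k * F (k⁻¹ * g * k) l := by
  intro g k l
  simp only [hF]
  have e1 : k * (k⁻¹ * g * k) = g * k := by group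
  have e2 : l * (l⁻¹ * (k⁻¹ * g * k) * l) = k⁻¹ * g * k * l := by group
  have e3 : (k * l)⁻¹ * g * (k * l) = l⁻¹ * (k⁻¹ * g * k) * l := by group
  have h1 := hcoc g k l
  have h2 := hcoc k (k⁻¹ * g * k) l
  rw [e1] at h2
  have h3 := hcoc k l (l⁻¹ * (k⁻¹ * g * k) * l)
  rw [e2] at h3
  rw [e3]
  rw [Units.ext_iff] at h1 h2 h3
  push_cast at h1 h2 h3
  -- abbreviations as complex numbers
  set A := (ε g (k * l) : ℂ)
  set B := (ε g k : ℂ)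
  set C := (ε k (k⁻¹ * g * k) : ℂ)
  set D := (ε (k * l) (l⁻¹ * (k⁻¹ * g * k) * l) : ℂ)
  set E := (ε (k⁻¹ * g * k) l : ℂ)
  set H := (ε l (l⁻¹ * (k⁻¹ * g * k) * l) : ℂ)
  set P := (ε (g * k) l : ℂ)
  set Q := (ε k l : ℂ)
  set M := (ε k (k⁻¹ * g * k * l) : ℂ)
  have hPQ : P * Q ≠ 0 := mul_ne_zero (Units.ne_zero _) (Units.ne_zero _)
  have key : A * C * H = B * E * D := by
    refine mul_left_cancel₀ hPQ ?_
    linear_combination (-(P * C * H)) * h1 + P * B * H * h2 + (-(P * B * E)) * h3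
  rw [Units.ext_iff]
  push_cast
  have nD : D ≠ 0 := Units.ne_zero _
  have nC : C ≠ 0 := Units.ne_zero _
  have nH : H ≠ 0 := Units.ne_zero _
  field_simp
  linear_combination key
end

section
/- Let G be a group and ε : G × G → ℂˣ a 2-cocycle, i.e. ε(a,b)·ε(a·b,c) = ε(a,b·c)·ε(b,c) for all a,b,c ∈ G. Define F : G × G → ℂˣ by F(g,k) := ε(g,k)·ε(k, k⁻¹·g·k)⁻¹. Then F(g,k)·F(k⁻¹·g·k, k⁻¹) = 1 for all g,k ∈ G. (This is the inverse-compatibility condition i*𝓛 = 𝓛⁻¹ of an inner local system: the value of F on the inverse arrow of the inertia groupoid is the inverse of its value on the arrow.) -/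
/-- Inverse-compatibility `i*𝓛 = 𝓛⁻¹` of an inner local system. -/
theorem transgression_inverse_compatibility {G : Type*} [Group G] (ε : G → G → ℂˣ)
    (hcoc : ∀ a b c : G, ε a b * ε (a * b) c = ε a (b * c) * ε b c)
    (F : G → G → ℂˣ)
    (hF : ∀ g k : G, F g k = ε g k * (ε k (k⁻¹ * g * k))⁻¹) :
    ∀ g k : G, F g k * F (k⁻¹ * g * k) k⁻¹ = 1 := by
  intro g k
  have e1 : k * (k⁻¹ * g * k) = g * k := by group
  have e2 : (k⁻¹ * g * k) * k⁻¹ = k⁻¹ * g := by group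
  have e3 : (k⁻¹)⁻¹ * (k⁻¹ * g * k) * k⁻¹ = g := by group
  have h1 := hcoc k (k⁻¹ * g * k) k⁻¹
  rw [e1, e2] at h1
  have h2 := hcoc g k k⁻¹
  simp only [mul_inv_cancel] at h2
  have h3 := hcoc k k⁻¹ g
  simp only [mul_inv_cancel, inv_mul_cancel_left] at h3
  have h4 := hcoc 1 1 g
  rw [one_mul, one_mul] at h4
  have h5 := hcoc g 1 1
  rw [mul_one, mul_one] at h5
  rw [hF, hF, e3]
  -- now pure commutative group identity
  have h4' : ε 1 g = ε 1 1 := by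
    have := mul_right_cancel h4.symm
    exact this
  have h5' : ε g 1 = ε 1 1 := mul_left_cancel h5
  calc ε g k * (ε k (k⁻¹ * g * k))⁻¹ * (ε (k⁻¹ * g * k) k⁻¹ * (ε k⁻¹ g)⁻¹)
      = (ε g k * ε (g * k) k⁻¹) * (ε k (k⁻¹ * g * k) * ε (g * k) k⁻¹)⁻¹
        * (ε (k⁻¹ * g * k) k⁻¹ * (ε k⁻¹ g)⁻¹) := by group
    _ = (ε g 1 * ε k k⁻¹) * (ε k (k⁻¹ * g) * ε (k⁻¹ * g * k) k⁻¹)⁻¹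
        * (ε (k⁻¹ * g * k) k⁻¹ * (ε k⁻¹ g)⁻¹) := by rw [h2, h1]
    _ = (ε g 1 * ε k k⁻¹) * (ε k (k⁻¹ * g))⁻¹ * (ε k⁻¹ g)⁻¹ := by
        rw [mul_inv]; group
    _ = (ε g 1 * ε k k⁻¹) * (ε k (k⁻¹ * g) * ε k⁻¹ g)⁻¹ := by rw [mul_inv]; group
    _ = (ε g 1 * ε k k⁻¹) * (ε k k⁻¹ * ε 1 g)⁻¹ := by rw [h3]
    _ = 1 := by rw [h4', h5', mul_inv]; group
end

section
/- Let G be a group and ε : G × G → ℂˣ a 2-cocycle, i.e. ε(a,b)·ε(a·b,c) = ε(a,b·c)·ε(b,c) for all a,b,c ∈ G. Fix g ∈ G. Then the map k ↦ ε(g,k)·ε(k,g)⁻¹, restricted to the centralizer C_G(g) = {k ∈ G : k·g = g·k}, is a group homomorphism C_G(g) → ℂˣ. (These are the one-dimensional representations of the centralizers obtained by transgressing a discrete-torsion class, as used by Adem–Ruan and Freed–Hopkins–Teleman.) -/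
/-- Transgressing a discrete-torsion class gives a one-dimensional
representation (a group homomorphism to `ℂˣ`) of the centralizer of `g`. -/
theorem transgressed_character_is_hom {G : Type*} [Group G] (ε : G → G → ℂˣ)
    (hcoc : ∀ a b c : G, ε a b * ε (a * b) c = ε a (b * c) * ε b c) (g : G) :
    ∃ φ : Subgroup.centralizer {g} →* ℂˣ,
      ∀ k : Subgroup.centralizer {g}, φ k = ε g (k : G) * (ε (k : G) g)⁻¹ := by
  have hone : ε g 1 = ε 1 g := by
    have h1 := hcoc g 1 1
    have h2 := hcoc 1 1 g
    simp only [mul_one, one_mul] at h1 h2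
    have e1 : ε g 1 = ε 1 1 := mul_left_cancel h1
    have e2 : ε 1 1 = ε 1 g := mul_right_cancel h2
    rw [e1, e2]
  refine ⟨{ toFun := fun k => ε g (k : G) * (ε (k : G) g)⁻¹,
            map_one' := ?_, map_mul' := ?_ }, fun k => rfl⟩
  · simp [hone]
  · rintro x y
    have hx : g * (x : G) = (x : G) * g := Subgroup.mem_centralizer_iff.mp x.2 g rfl
    have hy : g * (y : G) = (y : G) * g := Subgroup.mem_centralizer_iff.mp y.2 g rfl
    set a : G := (x : G)
    set b : G := (y : G)
    have h1 := hcoc g a b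
    have h2 := hcoc a g b
    have h3 := hcoc a b g
    rw [hx] at h1
    rw [hy] at h2
    -- pass to ℂ
    have H1 : (ε g (a*b) : ℂ) * ε a b = ε g a * ε (a*g) b := by
      exact_mod_cast congrArg Units.val h1.symm
    have H2 : (ε a g : ℂ) * ε (a*g) b = ε a (b*g) * ε g b := by
      exact_mod_cast congrArg Units.val h2
    have H3 : (ε a b : ℂ) * ε (a*b) g = ε a (b*g) * ε b g := by
      exact_mod_cast congrArg Units.val h3
    have hb : (ε a b : ℂ) ≠ 0 := Units.ne_zero _
    have key : (ε g (a*b) : ℂ) * ε a g * ε b g = ε g a * ε g b * ε (a*b) g := by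
      apply mul_left_cancel₀ hb
      linear_combination (ε a g : ℂ) * (ε b g : ℂ) * H1
        + (ε g a : ℂ) * (ε b g : ℂ) * H2 - (ε g a : ℂ) * (ε g b : ℂ) * H3
    show ε g (a*b) * (ε (a*b) g)⁻¹ = (ε g a * (ε a g)⁻¹) * (ε g b * (ε b g)⁻¹)
    ext
    push_cast
    have h1 : (ε (a*b) g : ℂ) ≠ 0 := Units.ne_zero _
    have h2 : (ε a g : ℂ) ≠ 0 := Units.ne_zero _
    have h3 : (ε b g : ℂ) ≠ 0 := Units.ne_zero _
    field_simp
    linear_combination key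
end

section
/- Let the group G act on the right on a set X, and let h be a 2-cocycle on the action groupoid, i.e. a function assigning to x ∈ X and a,b ∈ G a value h(x;a,b) ∈ ℂˣ with h(x;a,b)·h(x;a·b,c) = h(x;a,b·c)·h(x·a;b,c) for all x,a,b,c. Define f(x;g,k) := h(x;g,k)·h(x;k,k⁻¹·g·k)⁻¹. Then for every x ∈ X and g,k,l ∈ G with x·g = x, one has f(x;g,k·l) = f(x;g,k)·f(x·k; k⁻¹·g·k, l). (The transgressed local system f is a morphism of groupoids on the inertia groupoid ∧[X/G], whose objects are pairs (x,g) with x·g = x and whose arrows (x,g) → (x·k, k⁻¹gk) are indexed by k ∈ G.) -/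
/-- The transgressed local system of a gerbe over the action groupoid `[X/G]`
is a morphism of groupoids on the inertia groupoid `∧[X/G]`. -/
theorem action_transgression_is_groupoid_morphism {G X : Type*} [Group G]
    (act : X → G → X)
    (hact_one : ∀ x : X, act x 1 = x)
    (hact_mul : ∀ (x : X) (a b : G), act (act x a) b = act x (a * b))
    (h : X → G → G → ℂˣ)
    (hcoc : ∀ (x : X) (a b c : G),
      h x a b * h x (a * b) c = h x a (b * c) * h (act x a) b c)
    (f : X → G → G → ℂˣ)
    (hf : ∀ (x : X) (g k : G), f x g k = h x g k * (h x k (k⁻¹ * g * k))⁻¹) :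
    ∀ (x : X) (g k l : G), act x g = x →
      f x g (k * l) = f x g k * f (act x k) (k⁻¹ * g * k) l := by
  intro x g k l hx
  have e1 := hcoc x g k l
  have e2 := hcoc x k (k⁻¹ * g * k) l
  have e3 := hcoc x k l ((k * l)⁻¹ * g * (k * l))
  rw [hx] at e1
  have hk : k * (k⁻¹ * g * k) = g * k := by group
  rw [hk] at e2
  have hl : l * ((k * l)⁻¹ * g * (k * l)) = (k⁻¹ * g * k) * l := by group
  rw [hl] at e3
  have hl2 : (k * l)⁻¹ * g * (k * l) = l⁻¹ * (k⁻¹ * g * k) * l := by group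
  rw [hl2] at e3
  simp only [hf, hl2]
  -- abbreviations
  set A := h x g k
  set B := h x k (k⁻¹ * g * k)
  set P := h x g (k * l)
  set Q := h x (k * l) (l⁻¹ * (k⁻¹ * g * k) * l)
  set C := h (act x k) (k⁻¹ * g * k) l
  set D := h (act x k) l (l⁻¹ * (k⁻¹ * g * k) * l)
  set M := h x (g * k) l
  set N := h x k l
  set R := h x k (k⁻¹ * g * k * l)
  -- e1 : A * M = P * N, e2 : B * M = R * C, e3 : N * Q = R * D
  -- goal : P * Q⁻¹ = A * B⁻¹ * (C * D⁻¹)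
  have hP : P = A * M * N⁻¹ := by
    rw [eq_mul_inv_iff_mul_eq, ← e1]
  have hQ : Q = R * D * N⁻¹ := by
    rw [eq_mul_inv_iff_mul_eq, mul_comm Q N, e3]
  have hM : M = R * C * B⁻¹ := by
    rw [eq_mul_inv_iff_mul_eq, mul_comm M B, e2]
  rw [hP, hQ, hM]
  rw [Units.ext_iff]
  push_cast
  have hB : (B : ℂ) ≠ 0 := B.ne_zero
  have hN : (N : ℂ) ≠ 0 := N.ne_zero
  have hR : (R : ℂ) ≠ 0 := R.ne_zero
  have hD : (D : ℂ) ≠ 0 := D.ne_zero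
  field_simp
end

section
/- Let the group G act on the right on a set X, and let h be a 2-cocycle on the action groupoid, i.e. h(x;a,b)·h(x;a·b,c) = h(x;a,b·c)·h(x·a;b,c) for all x,a,b,c. Define f(x;g,k) := h(x;g,k)·h(x;k,k⁻¹·g·k)⁻¹. Then for every x ∈ X and g,k ∈ G with x·g = x, one has f(x;g,k)·f(x·k; k⁻¹·g·k, k⁻¹) = 1. (This is condition i*𝓛 = 𝓛⁻¹ in the definition of an inner local system on the inertia groupoid.) -/
/-- Condition `i*𝓛 = 𝓛⁻¹` of an inner local system on the inertia groupoid. -/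
theorem action_transgression_inverse_compatibility {G X : Type*} [Group G]
    (act : X → G → X)
    (hact_one : ∀ x : X, act x 1 = x)
    (hact_mul : ∀ (x : X) (a b : G), act (act x a) b = act x (a * b))
    (h : X → G → G → ℂˣ)
    (hcoc : ∀ (x : X) (a b c : G),
      h x a b * h x (a * b) c = h x a (b * c) * h (act x a) b c)
    (f : X → G → G → ℂˣ)
    (hf : ∀ (x : X) (g k : G), f x g k = h x g k * (h x k (k⁻¹ * g * k))⁻¹) :
    ∀ (x : X) (g k : G), act x g = x →
      f x g k * f (act x k) (k⁻¹ * g * k) k⁻¹ = 1 := by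
  intro x g k hx
  have hg : (k⁻¹)⁻¹ * (k⁻¹ * g * k) * k⁻¹ = g := by group
  rw [hf, hf, hg]
  have e1 := hcoc x k (k⁻¹ * g * k) k⁻¹
  have e2 := hcoc x g k k⁻¹
  have e3 := hcoc x k k⁻¹ g
  have e4 := hcoc x g 1 1
  have e5 := hcoc x 1 1 g
  have h1 : k * (k⁻¹ * g * k) = g * k := by group
  have h2 : k⁻¹ * g * k * k⁻¹ = k⁻¹ * g := by group
  rw [h1, h2] at e1
  simp only [mul_inv_cancel, inv_mul_cancel, one_mul, mul_one, hx, hact_one] at e2 e3 e4 e5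
  -- e4 : h x g 1 * h x g 1 = h x g 1 * h x 1 1, e5 : h x 1 1 * h x 1 g = h x 1 g * h x 1 g
  have e4' : h x g 1 = h x 1 1 := mul_left_cancel e4
  have e5' : h x 1 1 = h x 1 g := mul_right_cancel e5
  have main : h x g k * h (act x k) (k⁻¹ * g * k) k⁻¹
      = h x k (k⁻¹ * g * k) * h (act x k) k⁻¹ g := by
    refine Units.ext ?_
    have c1 := congrArg (Units.val) e1
    have c2 := congrArg (Units.val) e2
    have c3 := congrArg (Units.val) e3
    have c4 := congrArg (Units.val) e4'
    have c5 := congrArg (Units.val) e5'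
    simp only [Units.val_mul] at c1 c2 c3 c4 c5 ⊢
    have hE := (h x (g * k) k⁻¹).ne_zero
    have hF := (h x k (k⁻¹ * g)).ne_zero
    apply mul_right_cancel₀ (mul_ne_zero hE hF)
    linear_combination ((h (act x k) (k⁻¹*g*k) k⁻¹ : ℂˣ) : ℂ) * ((h x k (k⁻¹*g) : ℂˣ) : ℂ) * c2
      - ((h x g 1 : ℂˣ) : ℂ) * ((h x k k⁻¹ : ℂˣ) : ℂ) * c1
      + ((h x k (k⁻¹*g*k) : ℂˣ) : ℂ) * ((h x (g*k) k⁻¹ : ℂˣ) : ℂ) * ((h x k k⁻¹ : ℂˣ) : ℂ) * c4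
      + ((h x k (k⁻¹*g*k) : ℂˣ) : ℂ) * ((h x (g*k) k⁻¹ : ℂˣ) : ℂ) * ((h x k k⁻¹ : ℂˣ) : ℂ) * c5
      + ((h x k (k⁻¹*g*k) : ℂˣ) : ℂ) * ((h x (g*k) k⁻¹ : ℂˣ) : ℂ) * c3
  rw [mul_mul_mul_comm, main]
  rw [← mul_inv, mul_inv_cancel]
end

section
/- Let the group G act on the right on a set X and let f : X × G → ℂˣ be any function. Define its coboundary δf(x;a,b) := f(x;a)·f(x·a;b)·f(x;a·b)⁻¹, which is a 2-cocycle on the action groupoid. Then the transgression of δf satisfies, for every x ∈ X and g,k ∈ G with x·g = x: δf(x;g,k)·δf(x;k,k⁻¹·g·k)⁻¹ = f(x;g)·f(x·k; k⁻¹·g·k)⁻¹. (The transgressed line bundle of a coboundary gerbe is the coboundary, on the inertia groupoid, of the function (x,g) ↦ f(x;g); this is the key step showing the transgression descends to cohomology.) -/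
/-- The transgressed line bundle of a coboundary gerbe over the action
groupoid is the coboundary, on the inertia groupoid, of `(x,g) ↦ f x g`. -/
theorem action_transgression_of_coboundary {G X : Type*} [Group G]
    (act : X → G → X)
    (hact_one : ∀ x : X, act x 1 = x)
    (hact_mul : ∀ (x : X) (a b : G), act (act x a) b = act x (a * b))
    (f : X → G → ℂˣ) (δf : X → G → G → ℂˣ)
    (hδf : ∀ (x : X) (a b : G), δf x a b = f x a * f (act x a) b * (f x (a * b))⁻¹) :
    ∀ (x : X) (g k : G), act x g = x →
      δf x g k * (δf x k (k⁻¹ * g * k))⁻¹ = f x g * (f (act x k) (k⁻¹ * g * k))⁻¹ := by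
  intro x g k hx
  rw [hδf, hδf, hx]
  have h1 : k * (k⁻¹ * g * k) = g * k := by group
  rw [h1]
  group
  rw [mul_right_comm]
  group
end

section
/- Let the group G act on the left on a topological space X, and let h : G × X → ℂˣ be a 1-cocycle on the action groupoid, i.e. h(a·b, x) = h(a, b•x)·h(b, x) for all a,b ∈ G and x ∈ X, such that for each k ∈ G the function x ↦ h(k,x) is locally constant on X. If x ∈ X and g ∈ G are such that x and g•x are joined by a path in X, then for every k ∈ G one has h(k·g·k⁻¹, k•x) = h(g, x). (This is the flat global-quotient case of the theorem that the holonomy H(φ,g) = h(g,φ(0))⁻¹ of a flat line bundle over the orbifold [X/G] is invariant under the arrows of the loop groupoid, i.e. δH = 1.) -/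
/-! Conjugating by `k` and using the cocycle identity twice gives
`h (k g k⁻¹) (k • x) = h k (g • x) * h g x * (h k x)⁻¹`. Since `h k` is locally constant and
`x`, `g • x` lie in one path component, `h k (g • x) = h k x`, and the two factors cancel in the
abelian group `ℂˣ`. -/

theorem IsLocallyConstant.apply_eq_of_joined {X Y : Type*} [TopologicalSpace X] {f : X → Y}
    (hf : IsLocallyConstant f) {x y : X} (hxy : Joined x y) : f x = f y :=
  hf.apply_eq_of_isPreconnected isPreconnected_connectedComponent mem_connectedComponent
    (pathComponent_subset_component x hxy)

section Cocycle

variable {G X M : Type*} [Group G] [MulAction G X] [Group M] {h : G → X → M}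

theorem cocycle_one (hcoc : ∀ (a b : G) (x : X), h (a * b) x = h a (b • x) * h b x) (x : X) :
    h 1 x = 1 := by
  simpa using hcoc 1 1 x

theorem cocycle_inv (hcoc : ∀ (a b : G) (x : X), h (a * b) x = h a (b • x) * h b x)
    (k : G) (x : X) : h k⁻¹ (k • x) = (h k x)⁻¹ := by
  refine eq_inv_of_mul_eq_one_left ?_
  rw [← hcoc, inv_mul_cancel, cocycle_one hcoc]

theorem cocycle_conj (hcoc : ∀ (a b : G) (x : X), h (a * b) x = h a (b • x) * h b x)
    (k g : G) (x : X) : h (k * g * k⁻¹) (k • x) = h k (g • x) * h g x * (h k x)⁻¹ := by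
  rw [hcoc, inv_smul_smul, cocycle_inv hcoc, hcoc]

end Cocycle

/-- Flat global-quotient case of the holonomy theorem: the holonomy of a flat
line bundle over `[X/G]` is invariant under the arrows of the loop groupoid. -/
theorem flat_holonomy_invariant {G X : Type*} [Group G] [TopologicalSpace X]
    [MulAction G X] (h : G → X → ℂˣ)
    (hcoc : ∀ (a b : G) (x : X), h (a * b) x = h a (b • x) * h b x)
    (hlc : ∀ k : G, IsLocallyConstant (fun x : X => h k x))
    (x : X) (g : G) (hpath : Joined x (g • x)) :
    ∀ k : G, h (k * g * k⁻¹) (k • x) = h g x := by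
  intro k
  have hk : h k (g • x) = h k x := ((hlc k).apply_eq_of_joined hpath).symm
  rw [cocycle_conj hcoc, hk, mul_inv_cancel_comm]
end
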